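/- On a non-degenerate triangle T, the space P^{1+}(T) := P1(T)^2 ⊕ span{curl(λ1 λ2 λ3)} equals the subspace of P^{2-}(T) consisting of those vector fields whose divergence is constant on T, where P^{2-}(T) = {v ∈ P2(T)^2 : v·n|_{e_i} ∈ P1(e_i), i=1,2,3}. -/

import Mathlib

open MeasureTheory
open scoped Classical

noncomputable section

/-- The plane. -/
abbrev V2 : Type := ℝ × ℝ

/-- Euclidean dot product on the plane. -/
def dot2 (u v : V2) : ℝ := u.1 * v.1 + u.2 * v.2

/-- 2D cross product. -/
def cross2 (u v : V2) : ℝ := u.1 * v.2 - u.2 * v.1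

/-- Euclidean norm on the plane. -/
def enorm2 (u : V2) : ℝ := Real.sqrt (u.1 ^ 2 + u.2 ^ 2)

/-- `f` is (the restriction of) a polynomial of total degree at most `k`. -/
def IsPolyDeg (k : ℕ) (f : V2 → ℝ) : Prop :=
  ∃ p : MvPolynomial (Fin 2) ℝ, p.totalDegree ≤ k ∧
    ∀ x : V2, f x = MvPolynomial.eval (fun i : Fin 2 => if i = 0 then x.1 else x.2) p

/-- A vector field whose two components are polynomials of degree at most `k`. -/
def IsVPolyDeg (k : ℕ) (v : V2 → V2) : Prop :=
  IsPolyDeg k (fun x => (v x).1) ∧ IsPolyDeg k (fun x => (v x).2)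

/-- partial derivative in the `x` direction -/
def pd1 (f : V2 → ℝ) (x : V2) : ℝ := fderiv ℝ f x (1, 0)

/-- partial derivative in the `y` direction -/
def pd2 (f : V2 → ℝ) (x : V2) : ℝ := fderiv ℝ f x (0, 1)

/-- `curl` of a scalar function: `(∂w/∂y, -∂w/∂x)`. -/
def curl2 (w : V2 → ℝ) : V2 → V2 := fun x => (pd2 w x, - pd1 w x)

/-- divergence of a planar vector field -/
def div2 (v : V2 → V2) (x : V2) : ℝ :=
  pd1 (fun y => (v y).1) x + pd2 (fun y => (v y).2) x

/-- Parametrization of the segment from `p` to `q`. -/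
def seg (p q : V2) (s : ℝ) : V2 := p + s • (q - p)

/-- A non-degenerate triangle, together with its barycentric coordinates `lam i`,
unit outward normals `nrm i` and unit tangents `tang i` of the edges `e i`
(the edge `e i` being opposite the vertex `a i`, joining `a (i+1)` and `a (i+2)`),
oriented so that `nrm i × tang i > 0`. -/
structure Triangle where
  a : Fin 3 → V2
  indep : AffineIndependent ℝ a
  lam : Fin 3 → V2 → ℝ
  lam_affine : ∀ i, ∃ (L : V2 →ₗ[ℝ] ℝ) (c : ℝ), ∀ x, lam i x = L x + c
  lam_apply : ∀ i j, lam i (a j) = if i = j then (1 : ℝ) else 0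
  nrm : Fin 3 → V2
  tang : Fin 3 → V2
  nrm_unit : ∀ i, enorm2 (nrm i) = 1
  tang_unit : ∀ i, enorm2 (tang i) = 1
  tang_parallel : ∀ i, ∃ c : ℝ, a (i + 2) - a (i + 1) = c • tang i
  nrm_orth : ∀ i, dot2 (nrm i) (tang i) = 0
  nrm_outward : ∀ i, dot2 (nrm i) (a i - a (i + 1)) < 0
  orient : ∀ i, 0 < cross2 (nrm i) (tang i)

/-- The (closed) triangle as a subset of the plane. -/
def triSet (T : Triangle) : Set V2 := convexHull ℝ (Set.range T.a)

/-- Parametrization of the edge `e i` of `T` (from `a (i+1)` to `a (i+2)`). -/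
def epara (T : Triangle) (i : Fin 3) (s : ℝ) : V2 := seg (T.a (i + 1)) (T.a (i + 2)) s

/-- Length of edge `e i`. -/
def elen (T : Triangle) (i : Fin 3) : ℝ := enorm2 (T.a (i + 2) - T.a (i + 1))

/-- Area of the triangle. -/
def areaT (T : Triangle) : ℝ := |cross2 (T.a 1 - T.a 0) (T.a 2 - T.a 0)| / 2

/-- The normal component of `v` on each edge of `T` is a polynomial of degree at
most one along that edge. -/
def NormalP1 (T : Triangle) (v : V2 → V2) : Prop :=
  ∀ i : Fin 3, ∃ α β : ℝ, ∀ s ∈ Set.Icc (0 : ℝ) 1,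
    dot2 (v (epara T i s)) (T.nrm i) = α + β * s

/-- Membership in `P^{2-}(T)`: vector-valued quadratic polynomials whose normal
components on the edges are of degree at most one. -/
def memP2m (T : Triangle) (v : V2 → V2) : Prop := IsVPolyDeg 2 v ∧ NormalP1 T v

/-!
For a quadratic field `v` with homogeneous quadratic part `Q v`, the cubic form
`Φ v u = u × Q v u` depends linearly on `v`. If the normal component of `v` on an edge has
degree one, then `Q v u` is parallel to the edge direction `u`, i.e. `Φ v u = 0`. If `div v` is
constant on `T`, then `Q v` is divergence free, and a divergence-free `Q v` with `Φ v = 0` is zero.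
For the bubble `b = λ₀λ₁λ₂` one has `Φ (curl b) = -3 ℓ₀ℓ₁ℓ₂`, where `ℓ i` is the linear part of
`λ i`, and this does not vanish at `u₀ = e₁ - e₂` (difference of two edge vectors). Subtracting
from `v` the multiple of `curl b` that kills `Φ v u₀` leaves a field whose cubic form vanishes at
four pairwise independent directions, hence identically, so that field is affine. Evaluating
`Φ · u₀` also shows that the sum is direct.
-/

open MvPolynomial

lemma Finsupp.eq_single_zero_add_single_one (d : Fin 2 →₀ ℕ) :
    d = Finsupp.single 0 (d 0) + Finsupp.single 1 (d 1) := by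
  ext i
  fin_cases i <;> simp

lemma isPolyDeg_const (k : ℕ) (a : ℝ) : IsPolyDeg k (fun _ => a) :=
  ⟨C a, by simp, fun _ => by simp⟩

lemma isPolyDeg_fst : IsPolyDeg 1 (fun x : V2 => x.1) :=
  ⟨X 0, by simp, fun _ => by simp⟩

lemma isPolyDeg_snd : IsPolyDeg 1 (fun x : V2 => x.2) :=
  ⟨X 1, by simp, fun _ => by simp⟩

namespace IsPolyDeg

variable {k l : ℕ} {f g : V2 → ℝ}

lemma mono (hf : IsPolyDeg k f) (hkl : k ≤ l) : IsPolyDeg l f := by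
  obtain ⟨p, hp, hfp⟩ := hf
  exact ⟨p, hp.trans hkl, hfp⟩

lemma add (hf : IsPolyDeg k f) (hg : IsPolyDeg k g) : IsPolyDeg k (fun x => f x + g x) := by
  obtain ⟨p, hp, hfp⟩ := hf
  obtain ⟨q, hq, hgq⟩ := hg
  exact ⟨p + q, (totalDegree_add p q).trans (max_le hp hq), fun x => by simp [hfp, hgq]⟩

lemma mul (hf : IsPolyDeg k f) (hg : IsPolyDeg l g) :
    IsPolyDeg (k + l) (fun x => f x * g x) := by
  obtain ⟨p, hp, hfp⟩ := hf
  obtain ⟨q, hq, hgq⟩ := hg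
  exact ⟨p * q, (totalDegree_mul p q).trans (add_le_add hp hq), fun x => by simp [hfp, hgq]⟩

lemma const_mul (hf : IsPolyDeg k f) (a : ℝ) : IsPolyDeg k (fun x => a * f x) := by
  simpa using (isPolyDeg_const 0 a).mul hf

lemma contDiff (hf : IsPolyDeg k f) {n : WithTop ℕ∞} : ContDiff ℝ n f := by
  obtain ⟨p, -, hfp⟩ := hf
  have hcoord : ∀ x : V2, (fun i : Fin 2 => if i = 0 then x.1 else x.2) =
      fun i => (if i = 0 then ContinuousLinearMap.fst ℝ ℝ ℝ else ContinuousLinearMap.snd ℝ ℝ ℝ) x :=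
    fun x => funext fun i => by split_ifs <;> rfl
  rw [show f = _ from funext hfp]
  simp_rw [hcoord]
  exact (AnalyticOnNhd.eval_continuousLinearMap' _ p).contDiff

lemma exists_coeff (hf : IsPolyDeg k f) :
    ∃ a : ℕ → ℕ → ℝ, ∀ x : V2,
      f x = ∑ i ∈ Finset.range (k + 1), ∑ j ∈ Finset.range (k + 1 - i),
        a i j * x.1 ^ i * x.2 ^ j := by
  obtain ⟨p, hp, hfp⟩ := hf
  refine ⟨fun i j => coeff (Finsupp.single 0 i + Finsupp.single 1 j) p, fun x => ?_⟩
  rw [hfp, eval_eq', Finset.sum_sigma']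
  refine Finset.sum_bij_ne_zero (fun d _ _ => ⟨d 0, d 1⟩) ?_ ?_ ?_ ?_
  · intro d hd _
    have hdeg : d 0 + d 1 ≤ k := by
      have := (le_totalDegree hd).trans hp
      rwa [Finsupp.sum_fintype _ _ (by simp), Fin.sum_univ_two] at this
    simp only [Finset.mem_sigma, Finset.mem_range]
    omega
  · intro d _ _ d' _ _ h
    simp only [Sigma.mk.injEq, heq_eq_eq] at h
    rw [d.eq_single_zero_add_single_one, d'.eq_single_zero_add_single_one, h.1, h.2]
  · rintro ⟨i, j⟩ _ hne
    refine ⟨Finsupp.single 0 i + Finsupp.single 1 j, ?_, ?_, by simp⟩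
    · exact mem_support_iff.mpr (left_ne_zero_of_mul (left_ne_zero_of_mul hne))
    · simpa [Fin.prod_univ_two, mul_assoc] using hne
  · intro d _ _
    conv_lhs => rw [d.eq_single_zero_add_single_one]
    simp [Fin.prod_univ_two, mul_assoc]

lemma exists_affine (hf : IsPolyDeg 1 f) :
    ∃ a b c : ℝ, ∀ x : V2, f x = a + b * x.1 + c * x.2 := by
  obtain ⟨a, ha⟩ := hf.exists_coeff
  exact ⟨a 0 0, a 1 0, a 0 1, fun x => by simp [ha, Finset.sum_range_succ]; ring⟩

lemma exists_quadratic (hf : IsPolyDeg 2 f) :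
    ∃ a b c d e g : ℝ, ∀ x : V2,
      f x = a + b * x.1 + c * x.2 + d * x.1 ^ 2 + e * (x.1 * x.2) + g * x.2 ^ 2 := by
  obtain ⟨a, ha⟩ := hf.exists_coeff
  exact ⟨a 0 0, a 1 0, a 0 1, a 2 0, a 1 1, a 0 2,
    fun x => by simp [ha, Finset.sum_range_succ]; ring⟩

lemma apply_add_smul (hf : IsPolyDeg 1 f) (a u : V2) (s : ℝ) :
    f (a + s • u) = f a + s * (f (a + u) - f a) := by
  obtain ⟨c₀, c₁, c₂, hq⟩ := hf.exists_affine
  simp only [hq, Prod.fst_add, Prod.snd_add, Prod.smul_fst, Prod.smul_snd, smul_eq_mul]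
  ring

end IsPolyDeg

lemma isPolyDeg_affine (a b c : ℝ) : IsPolyDeg 1 (fun x : V2 => a + b * x.1 + c * x.2) :=
  ((isPolyDeg_const 1 a).add (isPolyDeg_fst.const_mul b)).add (isPolyDeg_snd.const_mul c)

lemma IsVPolyDeg.differentiable {k : ℕ} {v : V2 → V2} (hv : IsVPolyDeg k v) :
    Differentiable ℝ v :=
  (hv.1.contDiff.prodMk hv.2.contDiff).differentiable (n := 1) one_ne_zero

lemma fderiv_quadratic (a b c d e g : ℝ) (x u : V2) :
    fderiv ℝ (fun y : V2 => a + b * y.1 + c * y.2 + d * y.1 ^ 2 + e * (y.1 * y.2) + g * y.2 ^ 2)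
      x u = (b + 2 * d * x.1 + e * x.2) * u.1 + (c + e * x.1 + 2 * g * x.2) * u.2 := by
  have h₁ : HasFDerivAt (fun y : V2 => y.1) (ContinuousLinearMap.fst ℝ ℝ ℝ) x := hasFDerivAt_fst
  have h₂ : HasFDerivAt (fun y : V2 => y.2) (ContinuousLinearMap.snd ℝ ℝ ℝ) x := hasFDerivAt_snd
  have hq : HasFDerivAt
      (fun y : V2 => a + b * y.1 + c * y.2 + d * y.1 ^ 2 + e * (y.1 * y.2) + g * y.2 ^ 2) _ x :=
    (((((hasFDerivAt_const a x).add (h₁.const_mul b)).add (h₂.const_mul c)).add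
      ((h₁.pow 2).const_mul d)).add ((h₁.mul h₂).const_mul e)).add ((h₂.pow 2).const_mul g)
  rw [hq.fderiv]
  simp
  ring

lemma div2_eq_of_quadratic {v : V2 → V2} {a b c d e g a' b' c' d' e' g' : ℝ}
    (h₁ : ∀ x, (v x).1 = a + b * x.1 + c * x.2 + d * x.1 ^ 2 + e * (x.1 * x.2) + g * x.2 ^ 2)
    (h₂ : ∀ x, (v x).2 = a' + b' * x.1 + c' * x.2 + d' * x.1 ^ 2 + e' * (x.1 * x.2) + g' * x.2 ^ 2)
    (x : V2) : div2 v x = (b + c') + (2 * d + e') * x.1 + (e + 2 * g') * x.2 := by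
  rw [div2, pd1, pd2, funext h₁, funext h₂, fderiv_quadratic, fderiv_quadratic]
  ring

lemma div2_add {v w : V2 → V2} (hv : Differentiable ℝ v) (hw : Differentiable ℝ w) (x : V2) :
    div2 (v + w) x = div2 v x + div2 w x := by
  simp only [div2, pd1, pd2, Pi.add_apply, Prod.fst_add, Prod.snd_add]
  rw [fderiv_fun_add (hv.fst x) (hw.fst x), fderiv_fun_add (hv.snd x) (hw.snd x)]
  simp only [add_apply]
  ring

lemma div2_smul {v : V2 → V2} (hv : Differentiable ℝ v) (c : ℝ) (x : V2) :
    div2 (c • v) x = c * div2 v x := by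
  simp only [div2, pd1, pd2, Pi.smul_apply, Prod.smul_fst, Prod.smul_snd, smul_eq_mul]
  rw [fderiv_const_mul (hv.fst x), fderiv_const_mul (hv.snd x)]
  simp only [smul_apply, smul_eq_mul]
  ring

lemma div2_curl2 {w : V2 → ℝ} (hw : ContDiff ℝ 2 w) (x : V2) : div2 (curl2 w) x = 0 := by
  have hsymm := hw.contDiffAt.isSymmSndFDerivAt (x := x) (by simp)
  have hd : Differentiable ℝ (fderiv ℝ w) :=
    (hw.fderiv_right (m := 1) (by norm_num)).differentiable (by norm_num)
  simp only [div2, curl2, pd1, pd2]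
  rw [fderiv_fun_neg, fderiv_clm_apply (hd x) (differentiableAt_const _),
    fderiv_clm_apply (hd x) (differentiableAt_const _)]
  simp [hsymm (1, 0) (0, 1)]

lemma apply_eq_fst_mul_add_snd_mul (L : V2 →L[ℝ] ℝ) (x : V2) :
    L x = x.1 * L (1, 0) + x.2 * L (0, 1) := by
  conv_lhs => rw [show x = x.1 • ((1, 0) : V2) + x.2 • ((0, 1) : V2) by ext <;> simp]
  rw [map_add, map_smul, map_smul, smul_eq_mul, smul_eq_mul]

lemma dot2_curl2 (w : V2 → ℝ) (x n : V2) : dot2 (curl2 w x) n = fderiv ℝ w x (-n.2, n.1) := by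
  rw [apply_eq_fst_mul_add_snd_mul (fderiv ℝ w x), dot2, curl2, pd1, pd2]
  ring

lemma mul_sub_mul_eq_det_mul_cross2 (L M : V2 →L[ℝ] ℝ) (u w : V2) :
    L u * M w - L w * M u = (L (1, 0) * M (0, 1) - L (0, 1) * M (1, 0)) * cross2 u w := by
  rw [apply_eq_fst_mul_add_snd_mul L u, apply_eq_fst_mul_add_snd_mul L w,
    apply_eq_fst_mul_add_snd_mul M u, apply_eq_fst_mul_add_snd_mul M w, cross2]
  ring

lemma cross2_eq_zero_of_dot2_eq_zero {u v n : V2} (hn : n ≠ 0) (hu : dot2 u n = 0)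
    (hv : dot2 v n = 0) : cross2 u v = 0 := by
  simp only [dot2, cross2] at *
  have h₁ : (u.1 * v.2 - u.2 * v.1) * n.1 = 0 := by linear_combination v.2 * hu - u.2 * hv
  have h₂ : (u.1 * v.2 - u.2 * v.1) * n.2 = 0 := by linear_combination u.1 * hv - v.1 * hu
  by_contra h
  exact hn (Prod.ext ((mul_eq_zero.mp h₁).resolve_left h) ((mul_eq_zero.mp h₂).resolve_left h))

lemma eq_zero_of_dot2_eq_zero {g u w : V2} (huw : cross2 u w ≠ 0) (hu : dot2 g u = 0)
    (hw : dot2 g w = 0) : g = 0 := by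
  simp only [dot2, cross2] at *
  have h₁ : g.1 * (u.1 * w.2 - u.2 * w.1) = 0 := by linear_combination w.2 * hu - u.2 * hw
  have h₂ : g.2 * (u.1 * w.2 - u.2 * w.1) = 0 := by linear_combination u.1 * hw - w.1 * hu
  exact Prod.ext ((mul_eq_zero.mp h₁).resolve_right huw) ((mul_eq_zero.mp h₂).resolve_right huw)

lemma exists_perp_eq_smul {u n : V2} (hu : u ≠ 0) (h : dot2 u n = 0) :
    ∃ c : ℝ, ((-n.2, n.1) : V2) = c • u := by
  have hu2 : u.1 ^ 2 + u.2 ^ 2 ≠ 0 := by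
    contrapose! hu
    ext <;> simp <;> nlinarith [sq_nonneg u.1, sq_nonneg u.2]
  simp only [dot2] at h
  refine ⟨cross2 n u / (u.1 ^ 2 + u.2 ^ 2), Prod.ext ?_ ?_⟩ <;>
    simp only [cross2, Prod.smul_fst, Prod.smul_snd, smul_eq_mul] <;> field_simp
  · linear_combination (-u.2) * h
  · linear_combination u.1 * h

/-- The homogeneous quadratic part of `f` when `f` is a quadratic polynomial. -/
def quadPart (f : V2 → ℝ) (u : V2) : ℝ := (f u + f (-u)) / 2 - f 0

lemma quadPart_of_quadratic {f : V2 → ℝ} {a b c d e g : ℝ}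
    (hf : ∀ x, f x = a + b * x.1 + c * x.2 + d * x.1 ^ 2 + e * (x.1 * x.2) + g * x.2 ^ 2)
    (u : V2) : quadPart f u = d * u.1 ^ 2 + e * (u.1 * u.2) + g * u.2 ^ 2 := by
  simp only [quadPart, hf, Prod.fst_neg, Prod.snd_neg, Prod.fst_zero, Prod.snd_zero]
  ring

lemma IsPolyDeg.quadPart_eq_zero {f : V2 → ℝ} (hf : IsPolyDeg 1 f) (u : V2) :
    quadPart f u = 0 := by
  obtain ⟨c₀, c₁, c₂, hq⟩ := hf.exists_affine
  simp only [quadPart, hq, Prod.fst_neg, Prod.snd_neg, Prod.fst_zero, Prod.snd_zero]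
  ring

lemma IsPolyDeg.second_difference {f : V2 → ℝ} (hf : IsPolyDeg 2 f) (a u : V2) :
    f a - 2 * f (a + (1 / 2 : ℝ) • u) + f (a + u) = quadPart f u / 2 := by
  obtain ⟨c₀, c₁, c₂, d, e, g, hq⟩ := hf.exists_quadratic
  simp only [quadPart, hq, Prod.fst_add, Prod.snd_add, Prod.smul_fst, Prod.smul_snd,
    Prod.fst_neg, Prod.snd_neg, Prod.fst_zero, Prod.snd_zero, smul_eq_mul]
  ring

def quadCross (w : V2 → V2) (u : V2) : ℝ :=
  cross2 u (quadPart (fun x => (w x).1) u, quadPart (fun x => (w x).2) u)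

lemma quadCross_add_smul (v w : V2 → V2) (c : ℝ) (u : V2) :
    quadCross (v + c • w) u = quadCross v u + c * quadCross w u := by
  simp only [quadCross, quadPart, cross2, Pi.add_apply, Pi.smul_apply, Prod.fst_add,
    Prod.snd_add, Prod.smul_fst, Prod.smul_snd, smul_eq_mul]
  ring

lemma IsVPolyDeg.quadCross_eq_zero {v : V2 → V2} (hv : IsVPolyDeg 1 v) (u : V2) :
    quadCross v u = 0 := by
  simp [quadCross, hv.1.quadPart_eq_zero, hv.2.quadPart_eq_zero, cross2]

def IsCubicForm (F : V2 → ℝ) : Prop :=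
  ∃ A B C D : ℝ, ∀ u : V2,
    F u = A * u.1 ^ 3 + B * u.1 ^ 2 * u.2 + C * u.1 * u.2 ^ 2 + D * u.2 ^ 3

lemma IsCubicForm.map_neg {F : V2 → ℝ} (hF : IsCubicForm F) (u : V2) : F (-u) = -F u := by
  obtain ⟨A, B, C, D, hF⟩ := hF
  simp only [hF, Prod.fst_neg, Prod.snd_neg]
  ring

lemma IsCubicForm.eq_zero {F : V2 → ℝ} (hF : IsCubicForm F) {u w : V2} (huw : cross2 u w ≠ 0)
    (hu : F u = 0) (hw : F w = 0) (hadd : F (u + w) = 0) (hsub : F (u - w) = 0) (x : V2) :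
    F x = 0 := by
  obtain ⟨A, B, C, D, hF⟩ := hF
  simp only [hF, Prod.fst_add, Prod.snd_add, Prod.fst_sub, Prod.snd_sub] at hu hw hadd hsub ⊢
  -- in the basis `u, w`: `cross2 u w • x = cross2 x w • u + cross2 u x • w`
  obtain ⟨α, hα⟩ : ∃ α, α = cross2 x w := ⟨_, rfl⟩
  obtain ⟨β, hβ⟩ : ∃ β, β = cross2 u x := ⟨_, rfl⟩
  have key : cross2 u w ^ 3 * (A * x.1 ^ 3 + B * x.1 ^ 2 * x.2 + C * x.1 * x.2 ^ 2 + D * x.2 ^ 3)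
      = 0 := by
    linear_combination (norm := skip) (α ^ 3 - α * β ^ 2) * hu + (β ^ 3 - α ^ 2 * β) * hw
      + ((α ^ 2 * β + α * β ^ 2) / 2) * hadd + ((α * β ^ 2 - α ^ 2 * β) / 2) * hsub
    rw [hα, hβ]
    simp only [cross2]
    ring
  exact (mul_eq_zero.mp key).resolve_left (pow_ne_zero 3 huw)

lemma IsVPolyDeg.isCubicForm_quadCross {v : V2 → V2} (hv : IsVPolyDeg 2 v) :
    IsCubicForm (quadCross v) := by
  obtain ⟨a, b, c, d, e, g, h₁⟩ := hv.1.exists_quadratic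
  obtain ⟨a', b', c', d', e', g', h₂⟩ := hv.2.exists_quadratic
  refine ⟨d', e' - d, g' - e, -g, fun u => ?_⟩
  rw [quadCross, quadPart_of_quadratic h₁, quadPart_of_quadratic h₂, cross2]
  ring

namespace Triangle

variable (T : Triangle)

/-- The linear part of the affine function `lam i`. -/
def dlam (i : Fin 3) : V2 →L[ℝ] ℝ :=
  LinearMap.toContinuousLinearMap (Classical.choose (T.lam_affine i))

lemma lam_eq (i : Fin 3) (x : V2) : T.lam i x = T.dlam i x + T.lam i 0 := by
  obtain ⟨c, hc⟩ := Classical.choose_spec (T.lam_affine i)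
  rw [hc x, hc 0, dlam, map_zero, zero_add, LinearMap.coe_toContinuousLinearMap']

lemma hasFDerivAt_lam (i : Fin 3) (x : V2) : HasFDerivAt (T.lam i) (T.dlam i) x := by
  rw [show T.lam i = fun y => T.dlam i y + T.lam i 0 from funext (T.lam_eq i)]
  exact (T.dlam i).hasFDerivAt.add_const _

lemma isPolyDeg_lam (i : Fin 3) : IsPolyDeg 1 (T.lam i) := by
  convert isPolyDeg_affine (T.lam i 0) (T.dlam i (1, 0)) (T.dlam i (0, 1)) using 1 with x
  ext x
  rw [T.lam_eq i x, apply_eq_fst_mul_add_snd_mul (T.dlam i) x]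
  ring

lemma dlam_sub (i : Fin 3) (x y : V2) : T.dlam i (x - y) = T.lam i x - T.lam i y := by
  rw [map_sub, T.lam_eq i x, T.lam_eq i y]
  ring

def edgeVec (i : Fin 3) : V2 := T.a (i + 2) - T.a (i + 1)

lemma epara_eq (i : Fin 3) (s : ℝ) : epara T i s = T.a (i + 1) + s • T.edgeVec i := rfl

lemma edgeVec_one_add_edgeVec_two : T.edgeVec 1 + T.edgeVec 2 = -T.edgeVec 0 := by
  simp only [edgeVec, Fin.reduceAdd]
  abel

lemma dlam_edgeVec (j i : Fin 3) :
    T.dlam j (T.edgeVec i) = (if j = i + 2 then 1 else 0) - (if j = i + 1 then 1 else 0) := by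
  rw [edgeVec, dlam_sub, T.lam_apply, T.lam_apply]

lemma dlam_edgeVec_self (i : Fin 3) : T.dlam i (T.edgeVec i) = 0 := by
  rw [dlam_edgeVec]
  fin_cases i <;> simp

lemma edgeVec_ne_zero (i : Fin 3) : T.edgeVec i ≠ 0 := by
  intro h
  have := T.dlam_edgeVec (i + 1) i
  rw [h, map_zero] at this
  fin_cases i <;> simp at this

lemma cross2_edgeVec_ne_zero : cross2 (T.edgeVec 1) (T.edgeVec 2) ≠ 0 := by
  have h := mul_sub_mul_eq_det_mul_cross2 (T.dlam 1) (T.dlam 2) (T.edgeVec 1) (T.edgeVec 2)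
  simp only [dlam_edgeVec, Fin.reduceAdd, Fin.reduceEq, if_true, if_false] at h
  intro h0
  rw [h0] at h
  norm_num at h

lemma lam_epara (i : Fin 3) (s : ℝ) : T.lam i (epara T i s) = 0 := by
  rw [T.lam_eq, epara_eq, map_add, map_smul, dlam_edgeVec_self, smul_zero, add_zero, ← T.lam_eq,
    T.lam_apply]
  fin_cases i <;> simp

lemma vertex_mem_triSet (j : Fin 3) : T.a j ∈ triSet T :=
  subset_convexHull ℝ _ (Set.mem_range_self j)

lemma dot2_edgeVec_nrm (i : Fin 3) : dot2 (T.edgeVec i) (T.nrm i) = 0 := by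
  obtain ⟨c, hc⟩ := T.tang_parallel i
  have h := T.nrm_orth i
  simp only [edgeVec, hc, dot2, Prod.smul_fst, Prod.smul_snd, smul_eq_mul] at h ⊢
  linear_combination c * h

lemma nrm_ne_zero (i : Fin 3) : T.nrm i ≠ 0 := by
  intro h
  have := T.nrm_unit i
  simp [h, enorm2] at this

lemma dlam_perp_nrm (i : Fin 3) : T.dlam i (-(T.nrm i).2, (T.nrm i).1) = 0 := by
  obtain ⟨c, hc⟩ := exists_perp_eq_smul (T.edgeVec_ne_zero i) (T.dot2_edgeVec_nrm i)
  rw [hc, map_smul, dlam_edgeVec_self, smul_zero]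

def bubble : V2 → ℝ := fun y => T.lam 0 y * T.lam 1 y * T.lam 2 y

lemma fderiv_bubble (x u : V2) :
    fderiv ℝ T.bubble x u = T.dlam 0 u * (T.lam 1 x * T.lam 2 x)
      + T.dlam 1 u * (T.lam 0 x * T.lam 2 x) + T.dlam 2 u * (T.lam 0 x * T.lam 1 x) := by
  have h : HasFDerivAt T.bubble _ x :=
    ((T.hasFDerivAt_lam 0 x).mul (T.hasFDerivAt_lam 1 x)).mul (T.hasFDerivAt_lam 2 x)
  rw [h.fderiv]
  simp only [add_apply, smul_apply, smul_eq_mul, Pi.mul_apply]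
  ring

lemma contDiff_bubble : ContDiff ℝ 2 T.bubble :=
  (((T.isPolyDeg_lam 0).mul (T.isPolyDeg_lam 1)).mul (T.isPolyDeg_lam 2)).contDiff

lemma isPolyDeg_fderiv_bubble (u : V2) : IsPolyDeg 2 (fun x => fderiv ℝ T.bubble x u) := by
  simp only [fderiv_bubble]
  exact ((((T.isPolyDeg_lam 1).mul (T.isPolyDeg_lam 2)).const_mul _).add
    (((T.isPolyDeg_lam 0).mul (T.isPolyDeg_lam 2)).const_mul _)).add
    (((T.isPolyDeg_lam 0).mul (T.isPolyDeg_lam 1)).const_mul _)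

lemma isVPolyDeg_curl2_bubble : IsVPolyDeg 2 (curl2 T.bubble) :=
  ⟨T.isPolyDeg_fderiv_bubble (0, 1),
    by simpa [curl2, pd1] using (T.isPolyDeg_fderiv_bubble (1, 0)).const_mul (-1)⟩

lemma dot2_curl2_bubble_epara (i : Fin 3) (s : ℝ) :
    dot2 (curl2 T.bubble (epara T i s)) (T.nrm i) = 0 := by
  rw [dot2_curl2, fderiv_bubble]
  have hlam := T.lam_epara i s
  have hdlam := T.dlam_perp_nrm i
  fin_cases i <;> simp_all

lemma quadCross_curl2_bubble (u : V2) :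
    quadCross (curl2 T.bubble) u = -3 * (T.dlam 0 u * T.dlam 1 u * T.dlam 2 u) := by
  simp only [quadCross, quadPart, curl2, pd1, pd2, fderiv_bubble, cross2, T.lam_eq _ u,
    T.lam_eq _ (-u), map_neg]
  rw [apply_eq_fst_mul_add_snd_mul (T.dlam 0) u, apply_eq_fst_mul_add_snd_mul (T.dlam 1) u,
    apply_eq_fst_mul_add_snd_mul (T.dlam 2) u]
  ring

lemma quadCross_curl2_bubble_ne_zero :
    quadCross (curl2 T.bubble) (T.edgeVec 1 - T.edgeVec 2) ≠ 0 := by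
  simp [quadCross_curl2_bubble, dlam_edgeVec]

def divConstP2m : Submodule ℝ (V2 → V2) where
  carrier := {v | memP2m T v ∧ ∃ c : ℝ, ∀ x ∈ triSet T, div2 v x = c}
  add_mem' := by
    rintro v w ⟨⟨hv, hvn⟩, cv, hcv⟩ ⟨⟨hw, hwn⟩, cw, hcw⟩
    refine ⟨⟨⟨hv.1.add hw.1, hv.2.add hw.2⟩, fun i => ?_⟩, cv + cw, fun x hx => ?_⟩
    · obtain ⟨α, β, h⟩ := hvn i
      obtain ⟨α', β', h'⟩ := hwn i
      refine ⟨α + α', β + β', fun s hs => ?_⟩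
      simp only [dot2, Pi.add_apply, Prod.fst_add, Prod.snd_add] at h h' ⊢
      linear_combination h s hs + h' s hs
    · rw [div2_add hv.differentiable hw.differentiable, hcv x hx, hcw x hx]
  zero_mem' :=
    ⟨⟨⟨isPolyDeg_const 2 0, isPolyDeg_const 2 0⟩, fun _ => ⟨0, 0, by simp [dot2]⟩⟩, 0,
      fun _ _ => by simp [div2, pd1, pd2]⟩
  smul_mem' := by
    rintro c v ⟨⟨hv, hvn⟩, cv, hcv⟩
    refine ⟨⟨⟨hv.1.const_mul c, hv.2.const_mul c⟩, fun i => ?_⟩, c * cv, fun x hx => ?_⟩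
    · obtain ⟨α, β, h⟩ := hvn i
      refine ⟨c * α, c * β, fun s hs => ?_⟩
      simp only [dot2, Pi.smul_apply, Prod.smul_fst, Prod.smul_snd, smul_eq_mul] at h ⊢
      linear_combination c * h s hs
    · rw [div2_smul hv.differentiable, hcv x hx]

lemma mem_divConstP2m {v : V2 → V2} :
    v ∈ T.divConstP2m ↔ memP2m T v ∧ ∃ c : ℝ, ∀ x ∈ triSet T, div2 v x = c :=
  Iff.rfl

lemma mem_divConstP2m_of_isVPolyDeg_one {p : V2 → V2} (hp : IsVPolyDeg 1 p) :
    p ∈ T.divConstP2m := by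
  obtain ⟨a, b, c, h₁⟩ := hp.1.exists_affine
  obtain ⟨a', b', c', h₂⟩ := hp.2.exists_affine
  refine ⟨⟨⟨hp.1.mono one_le_two, hp.2.mono one_le_two⟩, fun i => ?_⟩, b + c', fun x _ => ?_⟩
  · refine ⟨dot2 (p (T.a (i + 1))) (T.nrm i),
      dot2 (p (T.a (i + 1) + T.edgeVec i)) (T.nrm i) - dot2 (p (T.a (i + 1))) (T.nrm i),
      fun s _ => ?_⟩
    simp only [epara_eq, dot2, hp.1.apply_add_smul, hp.2.apply_add_smul]
    ring
  · rw [div2_eq_of_quadratic (a := a) (b := b) (c := c) (d := 0) (e := 0) (g := 0)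
      (a' := a') (b' := b') (c' := c') (d' := 0) (e' := 0) (g' := 0)
      (fun x => by rw [h₁]; ring) (fun x => by rw [h₂]; ring)]
    ring

lemma curl2_bubble_mem : curl2 T.bubble ∈ T.divConstP2m :=
  ⟨⟨T.isVPolyDeg_curl2_bubble, fun i => ⟨0, 0, fun s _ => by
    rw [T.dot2_curl2_bubble_epara]; ring⟩⟩, 0, fun x _ => div2_curl2 T.contDiff_bubble x⟩

lemma quadCross_edgeVec_eq_zero {v : V2 → V2} (hv : memP2m T v) (i : Fin 3) :
    quadCross v (T.edgeVec i) = 0 := by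
  obtain ⟨⟨h₁, h₂⟩, hn⟩ := hv
  obtain ⟨α, β, h⟩ := hn i
  have d₁ := h₁.second_difference (T.a (i + 1)) (T.edgeVec i)
  have d₂ := h₂.second_difference (T.a (i + 1)) (T.edgeVec i)
  have e₀ := h 0 ⟨le_rfl, zero_le_one⟩
  have e₁ := h (1 / 2) ⟨by norm_num, by norm_num⟩
  have e₂ := h 1 ⟨zero_le_one, le_rfl⟩
  simp only [epara_eq, zero_smul, add_zero, one_smul, dot2] at e₀ e₁ e₂
  -- the normal component is affine along the edge, so its second difference vanishes
  have hQ : dot2 (quadPart (fun x => (v x).1) (T.edgeVec i),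
      quadPart (fun x => (v x).2) (T.edgeVec i)) (T.nrm i) = 0 := by
    simp only [dot2]
    linear_combination -2 * (T.nrm i).1 * d₁ - 2 * (T.nrm i).2 * d₂ + 2 * e₀ - 4 * e₁ + 2 * e₂
  exact cross2_eq_zero_of_dot2_eq_zero (T.nrm_ne_zero i) (T.dot2_edgeVec_nrm i) hQ

lemma isVPolyDeg_one_of_quadCross_eq_zero {v : V2 → V2} (hv : v ∈ T.divConstP2m)
    (hQ : ∀ u, quadCross v u = 0) : IsVPolyDeg 1 v := by
  obtain ⟨⟨⟨hv₁, hv₂⟩, -⟩, k, hk⟩ := hv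
  obtain ⟨a, b, c, d, e, g, h₁⟩ := hv₁.exists_quadratic
  obtain ⟨a', b', c', d', e', g', h₂⟩ := hv₂.exists_quadratic
  have hdiv : ∀ j, (b + c') + (2 * d + e') * (T.a j).1 + (e + 2 * g') * (T.a j).2 = k :=
    fun j => (div2_eq_of_quadratic h₁ h₂ _).symm.trans (hk _ (T.vertex_mem_triSet j))
  have hdivfree : ((2 * d + e', e + 2 * g') : V2) = 0 := by
    refine eq_zero_of_dot2_eq_zero T.cross2_edgeVec_ne_zero ?_ ?_ <;>
      simp only [dot2, edgeVec, Fin.reduceAdd, Prod.fst_sub, Prod.snd_sub]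
    · linear_combination hdiv 0 - hdiv 2
    · linear_combination hdiv 1 - hdiv 0
  simp only [Prod.mk_eq_zero] at hdivfree
  have hQ' : ∀ u : V2, u.1 * (d' * u.1 ^ 2 + e' * (u.1 * u.2) + g' * u.2 ^ 2)
      - u.2 * (d * u.1 ^ 2 + e * (u.1 * u.2) + g * u.2 ^ 2) = 0 := fun u => by
    rw [← hQ u, quadCross, quadPart_of_quadratic h₁, quadPart_of_quadratic h₂, cross2]
  have q₁ := hQ' (1, 0)
  have q₂ := hQ' (0, 1)
  have q₃ := hQ' (1, 1)
  have q₄ := hQ' (1, -1)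
  norm_num at q₁ q₂ q₃ q₄
  have hd : d = 0 := by linarith
  have he : e = 0 := by linarith
  have hg : g = 0 := by linarith
  have hd' : d' = 0 := by linarith
  have he' : e' = 0 := by linarith
  have hg' : g' = 0 := by linarith
  refine ⟨?_, ?_⟩
  · convert isPolyDeg_affine a b c using 2 with x
    rw [h₁, hd, he, hg]; ring
  · convert isPolyDeg_affine a' b' c' using 2 with x
    rw [h₂, hd', he', hg']; ring

lemma exists_isVPolyDeg_one_add_smul_curl2_bubble {v : V2 → V2} (hv : v ∈ T.divConstP2m) :
    ∃ c : ℝ, IsVPolyDeg 1 (v + c • curl2 T.bubble) := by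
  have hβ := T.quadCross_curl2_bubble_ne_zero
  obtain ⟨c, hc⟩ : ∃ c : ℝ, c = -quadCross v (T.edgeVec 1 - T.edgeVec 2) /
      quadCross (curl2 T.bubble) (T.edgeVec 1 - T.edgeVec 2) := ⟨_, rfl⟩
  have hw : v + c • curl2 T.bubble ∈ T.divConstP2m :=
    add_mem hv (Submodule.smul_mem _ c T.curl2_bubble_mem)
  have hF := hw.1.1.isCubicForm_quadCross
  refine ⟨c, T.isVPolyDeg_one_of_quadCross_eq_zero hw fun u => ?_⟩
  refine hF.eq_zero T.cross2_edgeVec_ne_zero (T.quadCross_edgeVec_eq_zero hw.1 1)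
    (T.quadCross_edgeVec_eq_zero hw.1 2) ?_ ?_ u
  · rw [T.edgeVec_one_add_edgeVec_two, hF.map_neg, T.quadCross_edgeVec_eq_zero hw.1 0, neg_zero]
  · rw [quadCross_add_smul, hc, div_mul_cancel₀ _ hβ, add_neg_cancel]

lemma add_smul_curl2_bubble_injective {p p' : V2 → V2} {c c' : ℝ} (hp : IsVPolyDeg 1 p)
    (hp' : IsVPolyDeg 1 p') (h : p + c • curl2 T.bubble = p' + c' • curl2 T.bubble) :
    p = p' ∧ c = c' := by
  have hc : c = c' := by
    have := congrArg (quadCross · (T.edgeVec 1 - T.edgeVec 2)) h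
    simp only [quadCross_add_smul, hp.quadCross_eq_zero, hp'.quadCross_eq_zero, zero_add] at this
    exact mul_right_cancel₀ T.quadCross_curl2_bubble_ne_zero this
  subst hc
  exact ⟨add_right_cancel h, rfl⟩

end Triangle

/-- `P^{1+}(T) := P1(T)² ⊕ span{curl(λ1 λ2 λ3)}` equals the subspace of
`P^{2-}(T)` of fields with constant divergence on `T`. The `∃!` expresses directness
of the sum. -/
theorem stmt1 (T : Triangle) (v : V2 → V2) :
    (∃! pc : (V2 → V2) × ℝ,
        IsVPolyDeg 1 pc.1 ∧
        ∀ x, v x = pc.1 x +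
          pc.2 • curl2 (fun y => T.lam 0 y * T.lam 1 y * T.lam 2 y) x) ↔
      (memP2m T v ∧ ∃ c : ℝ, ∀ x ∈ triSet T, div2 v x = c) := by
  rw [← T.mem_divConstP2m]
  change (∃! pc : (V2 → V2) × ℝ,
    IsVPolyDeg 1 pc.1 ∧ ∀ x, v x = (pc.1 + pc.2 • curl2 T.bubble) x) ↔ _
  constructor
  · rintro ⟨⟨p, c⟩, ⟨hp, hv⟩, -⟩
    rw [funext hv]
    exact add_mem (T.mem_divConstP2m_of_isVPolyDeg_one hp)
      (Submodule.smul_mem _ c T.curl2_bubble_mem)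
  · intro hv
    obtain ⟨c, hc⟩ := T.exists_isVPolyDeg_one_add_smul_curl2_bubble hv
    refine ⟨(v + c • curl2 T.bubble, -c), ⟨hc, fun x => by simp⟩, ?_⟩
    rintro ⟨p, c'⟩ ⟨hp, hv'⟩
    have h : p + c' • curl2 T.bubble = (v + c • curl2 T.bubble) + (-c) • curl2 T.bubble := by
      rw [← funext hv']
      simp
    obtain ⟨rfl, rfl⟩ := T.add_smul_curl2_bubble_injective hp hc h
    rfl
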